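/- Let X_1, …, X_{n+1} be exchangeable random elements of a measurable space X, let g : X → [0,1] be measurable, let ξ ∈ (0,1), and let Λ_1 ⊆ [0,1] be a finite grid with 1 ∈ Λ_1. Define the empirical first-stage risk R̂_{n+1}(λ_1) = (1/(n+1)) Σ_{i=1}^{n+1} 1{g(X_i) < 1 − λ_1} and the threshold λ̂_1 = min{ λ_1 ∈ Λ_1 : R̂_{n+1}(λ_1) ≤ 1 − ξ } (the set is nonempty since λ_1 = 1 yields zero empirical risk). Then λ̂_1 is a symmetric measurable function of (X_1,…,X_{n+1}), and for any λ̄_1 that is either a deterministic constant or a symmetric measurable function of (X_1,…,X_{n+1}) satisfying λ̄_1 ≥ λ̂_1 almost surely, the selection coverage satisfies P(g(X_{n+1}) ≥ 1 − λ̄_1) ≥ ξ. -/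
import Mathlib


open MeasureTheory ProbabilityTheory
open scoped ENNReal

/-- Random elements `Z 0, …, Z n` (taking values in a measurable space `W`) are
exchangeable if for every permutation `σ` of the index set, the joint distribution of
`(Z (σ 0), …, Z (σ n))` equals that of `(Z 0, …, Z n)`. -/
def Exchangeable {Ω W : Type*} [MeasurableSpace Ω] [MeasurableSpace W]
    (μ : Measure Ω) {m : ℕ} (Z : Fin m → Ω → W) : Prop :=
  ∀ σ : Equiv.Perm (Fin m),
    Measure.map (fun ω => fun i => Z (σ i) ω) μ = Measure.map (fun ω => fun i => Z i ω) μ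

theorem aux_measurable_inf' {α ι : Type*} [MeasurableSpace α] (s : Finset ι) (hs : s.Nonempty)
    (f : ι → α → ℝ) (hf : ∀ t ∈ s, Measurable (f t)) :
    Measurable (fun x => s.inf' hs (fun t => f t x)) := by
  induction hs using Finset.Nonempty.cons_induction with
  | singleton a => simp only [Finset.inf'_singleton]; exact hf a (by simp)
  | cons a s h hs ih =>
      have heq : (fun x => (Finset.cons a s h).inf' (Finset.cons_nonempty h) (fun t => f t x))
          = fun x => (f a x) ⊓ s.inf' hs (fun t => f t x) :=
        funext fun x => Finset.inf'_cons hs (fun t => f t x)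
      rw [heq]
      exact (hf a (by simp)).inf (ih (fun t ht => hf t (by simp [ht])))

/-- **First-stage coverage control.**
Let `X₁, …, X_{n+1}` be exchangeable, `g : 𝒳 → [0,1]` measurable, `ξ ∈ (0,1)`, and
`Λ₁ ⊆ [0,1]` a finite grid containing `1`.  Define the empirical first-stage risk
`R̂(λ₁) = (1/(n+1)) ∑ᵢ 1{g(Xᵢ) < 1 − λ₁}` and `λ̂₁ = min{λ₁ ∈ Λ₁ : R̂(λ₁) ≤ 1 − ξ}`
(the feasible set is nonempty since `λ₁ = 1` yields zero empirical risk).  Then `λ̂₁`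
is a symmetric measurable function of `(X₁,…,X_{n+1})`, and for every `λ̄₁` that is a
symmetric measurable function (in particular, a deterministic constant) of the `n+1`
features with `λ̄₁ ≥ λ̂₁` almost surely, the selection coverage satisfies
`P(g(X_{n+1}) ≥ 1 − λ̄₁) ≥ ξ`. -/
theorem first_stage_coverage_control
    {Ω 𝒳 : Type*} [MeasurableSpace Ω] [MeasurableSpace 𝒳]
    (μ : Measure Ω) [IsProbabilityMeasure μ] (n : ℕ)
    (X : Fin (n + 1) → Ω → 𝒳) (hXmeas : ∀ i, Measurable (X i))
    (hexch : Exchangeable μ X)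
    (g : 𝒳 → ℝ) (hgmeas : Measurable g) (hg01 : ∀ x, g x ∈ Set.Icc (0 : ℝ) 1)
    (ξ : ℝ) (hξ : ξ ∈ Set.Ioo (0 : ℝ) 1)
    (Λ₁ : Finset ℝ) (hΛ₁ : ∀ t ∈ Λ₁, t ∈ Set.Icc (0 : ℝ) 1) (h1Λ : (1 : ℝ) ∈ Λ₁)
    (Rhat : ℝ → (Fin (n + 1) → 𝒳) → ℝ)
    (hRhat : ∀ t x, Rhat t x
      = (1 / (n + 1)) * ∑ i : Fin (n + 1), (if g (x i) < 1 - t then (1 : ℝ) else 0))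
    (lamhat : (Fin (n + 1) → 𝒳) → ℝ)
    (hlamhat : ∀ x, lamhat x = sInf {t | t ∈ Λ₁ ∧ Rhat t x ≤ 1 - ξ})
    (lambar : (Fin (n + 1) → 𝒳) → ℝ) (hbarmeas : Measurable lambar)
    (hbarsym : ∀ (σ : Equiv.Perm (Fin (n + 1))) (x : Fin (n + 1) → 𝒳),
      lambar (x ∘ σ) = lambar x)
    (hbar_ge : ∀ᵐ ω ∂μ, lamhat (fun i => X i ω) ≤ lambar (fun i => X i ω)) :
    (∀ (σ : Equiv.Perm (Fin (n + 1))) (x : Fin (n + 1) → 𝒳), lamhat (x ∘ σ) = lamhat x)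
      ∧ Measurable lamhat
      ∧ ENNReal.ofReal ξ
          ≤ μ {ω | 1 - lambar (fun i => X i ω) ≤ g (X (Fin.last n) ω)} := by
  classical
  have hn1 : (0:ℝ) < (n:ℝ) + 1 := by positivity
  -- λ = 1 is always feasible
  have hfeas1 : ∀ x : Fin (n+1) → 𝒳, Rhat 1 x ≤ 1 - ξ := by
    intro x
    have hz : Rhat 1 x = 0 := by
      rw [hRhat]
      have : ∀ i : Fin (n+1), (if g (x i) < 1 - (1:ℝ) then (1:ℝ) else 0) = 0 := by
        intro i
        have := (hg01 (x i)).1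
        rw [if_neg (by linarith)]
      rw [Finset.sum_congr rfl (fun i _ => this i)]
      simp
    rw [hz]; linarith [hξ.2]
  set F : (Fin (n+1) → 𝒳) → Finset ℝ :=
    fun x => Λ₁.filter (fun t => Rhat t x ≤ 1 - ξ) with hF
  have hFne : ∀ x, (F x).Nonempty := fun x =>
    ⟨1, Finset.mem_filter.2 ⟨h1Λ, hfeas1 x⟩⟩
  have hmin : ∀ x, lamhat x = (F x).min' (hFne x) := by
    intro x
    rw [hlamhat]
    have hset : {t | t ∈ Λ₁ ∧ Rhat t x ≤ 1 - ξ} = ↑(F x) := by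
      ext t; simp [hF]
    rw [hset, (hFne x).csInf_eq_min']
  have hmem : ∀ x, lamhat x ∈ F x := fun x => (hmin x) ▸ (F x).min'_mem (hFne x)
  have hle : ∀ x, ∀ t ∈ F x, lamhat x ≤ t := fun x t ht =>
    (hmin x) ▸ (F x).min'_le t ht
  have hlamΛ : ∀ x, lamhat x ∈ Λ₁ := fun x => (Finset.mem_filter.1 (hmem x)).1
  have hlamfeas : ∀ x, Rhat (lamhat x) x ≤ 1 - ξ := fun x =>
    (Finset.mem_filter.1 (hmem x)).2
  -- symmetry of Rhat and lamhat
  have hRsym : ∀ t (σ : Equiv.Perm (Fin (n+1))) x, Rhat t (x ∘ σ) = Rhat t x := by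
    intro t σ x
    rw [hRhat, hRhat]
    congr 1
    exact Equiv.sum_comp σ (fun j => if g (x j) < 1 - t then (1:ℝ) else 0)
  have hsym : ∀ (σ : Equiv.Perm (Fin (n+1))) x, lamhat (x ∘ σ) = lamhat x := by
    intro σ x
    rw [hlamhat, hlamhat]
    congr 1
    ext t
    simp [hRsym t σ x]
  -- measurability of Rhat t
  have hRmeas : ∀ t, Measurable (fun x => Rhat t x) := by
    intro t
    simp only [hRhat]
    refine Measurable.const_mul (Finset.measurable_sum _ ?_) _
    intro i _
    exact Measurable.ite
      (measurableSet_lt (hgmeas.comp (measurable_pi_apply i)) measurable_const)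
      measurable_const measurable_const
  -- measurability of lamhat
  have hinf' : ∀ x, lamhat x
      = Λ₁.inf' ⟨1, h1Λ⟩ (fun t => if Rhat t x ≤ 1 - ξ then t else 1) := by
    intro x
    apply le_antisymm
    · apply Finset.le_inf'
      intro t ht
      by_cases hft : Rhat t x ≤ 1 - ξ
      · rw [if_pos hft]
        exact hle x t (Finset.mem_filter.2 ⟨ht, hft⟩)
      · rw [if_neg hft]
        exact (hΛ₁ _ (hlamΛ x)).2
    · have := Finset.inf'_le (f := fun t => if Rhat t x ≤ 1 - ξ then t else 1) (hlamΛ x)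
      simpa [if_pos (hlamfeas x)] using this
  have hmeas : Measurable lamhat := by
    have : lamhat = fun x => Λ₁.inf' ⟨1, h1Λ⟩ (fun t => if Rhat t x ≤ 1 - ξ then t else 1) :=
      funext hinf'
    rw [this]
    apply aux_measurable_inf'
    intro t _
    exact Measurable.ite (measurableSet_le (hRmeas t) measurable_const)
      measurable_const measurable_const
  refine ⟨hsym, hmeas, ?_⟩
  -- coverage
  set Y : Ω → (Fin (n+1) → 𝒳) := fun ω i => X i ω with hY
  have hYmeas : Measurable Y := measurable_pi_lambda _ hXmeas
  set ν : Measure (Fin (n+1) → 𝒳) := μ.map Y with hν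
  haveI : IsProbabilityMeasure ν := Measure.isProbabilityMeasure_map hYmeas.aemeasurable
  set E : Fin (n+1) → Set (Fin (n+1) → 𝒳) := fun i => {y | 1 - lamhat y ≤ g (y i)} with hE
  have hEmeas : ∀ i, MeasurableSet (E i) :=
    fun i => measurableSet_le (measurable_const.sub hmeas)
      (hgmeas.comp (measurable_pi_apply i))
  -- all E i have the same ν-measure
  have hEν : ∀ i, ν (E i) = ν (E (Fin.last n)) := by
    intro i
    set σ : Equiv.Perm (Fin (n+1)) := Equiv.swap i (Fin.last n) with hσ
    have hcomp : (fun ω => fun j => X (σ j) ω) = (fun y : Fin (n+1) → 𝒳 => y ∘ σ) ∘ Y := rfl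
    have hσmeas : Measurable (fun y : Fin (n+1) → 𝒳 => y ∘ σ) :=
      measurable_pi_lambda _ (fun j => measurable_pi_apply (σ j))
    have hmap : ν.map (fun y => y ∘ σ) = ν := by
      rw [hν, Measure.map_map hσmeas hYmeas, ← hcomp]
      exact hexch σ
    have hpre : (fun y : Fin (n+1) → 𝒳 => y ∘ σ) ⁻¹' (E (Fin.last n)) = E i := by
      ext y
      simp only [hE, Set.mem_preimage, Set.mem_setOf_eq, hsym σ y, Function.comp_apply]
      rw [hσ, Equiv.swap_apply_right]
    calc ν (E i) = ν ((fun y : Fin (n+1) → 𝒳 => y ∘ σ) ⁻¹' (E (Fin.last n))) := by rw [hpre]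
      _ = (ν.map (fun y => y ∘ σ)) (E (Fin.last n)) :=
          (Measure.map_apply hσmeas (hEmeas _)).symm
      _ = ν (E (Fin.last n)) := by rw [hmap]
  -- pointwise count
  have hcount : ∀ y, ENNReal.ofReal (((n:ℝ) + 1) * ξ)
      ≤ ∑ i : Fin (n+1), (E i).indicator (fun _ => (1:ℝ≥0∞)) y := by
    intro y
    have hS : ∑ i : Fin (n+1), (if g (y i) < 1 - lamhat y then (1:ℝ) else 0)
        ≤ ((n:ℝ) + 1) * (1 - ξ) := by
      have h1 := hlamfeas y
      rw [hRhat] at h1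
      rw [div_mul_eq_mul_div, one_mul, div_le_iff₀ hn1] at h1
      linarith [h1]
    have hreal : ((n:ℝ) + 1) * ξ
        ≤ ∑ i : Fin (n+1), (if 1 - lamhat y ≤ g (y i) then (1:ℝ) else 0) := by
      have hterm : ∀ i : Fin (n+1), (if 1 - lamhat y ≤ g (y i) then (1:ℝ) else 0)
          = 1 - (if g (y i) < 1 - lamhat y then (1:ℝ) else 0) := by
        intro i
        by_cases h : g (y i) < 1 - lamhat y
        · rw [if_neg (not_le.2 h), if_pos h]; ring
        · rw [if_pos (not_lt.1 h), if_neg h]; ring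
      simp only [hterm]
      rw [Finset.sum_sub_distrib]
      simp only [Finset.sum_const, Finset.card_univ, Fintype.card_fin, nsmul_eq_mul]
      push_cast
      linarith [hS]
    calc ENNReal.ofReal (((n:ℝ) + 1) * ξ)
        ≤ ENNReal.ofReal (∑ i : Fin (n+1), (if 1 - lamhat y ≤ g (y i) then (1:ℝ) else 0)) :=
          ENNReal.ofReal_le_ofReal hreal
      _ = ∑ i : Fin (n+1), ENNReal.ofReal (if 1 - lamhat y ≤ g (y i) then (1:ℝ) else 0) :=
          ENNReal.ofReal_sum_of_nonneg (fun i _ => by positivity)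
      _ = ∑ i : Fin (n+1), (E i).indicator (fun _ => (1:ℝ≥0∞)) y := by
          refine Finset.sum_congr rfl (fun i _ => ?_)
          by_cases h : 1 - lamhat y ≤ g (y i)
          · rw [if_pos h, Set.indicator_of_mem (by exact h)]
            simp
          · rw [if_neg h, Set.indicator_of_notMem (by exact h)]
            simp
  -- integrate
  have hsumν : ∑ i : Fin (n+1), ν (E i) = ((n+1 : ℕ) : ℝ≥0∞) * ν (E (Fin.last n)) := by
    rw [Finset.sum_congr rfl (fun i _ => hEν i), Finset.sum_const, Finset.card_univ,
      Fintype.card_fin, nsmul_eq_mul]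
  have hint : ENNReal.ofReal (((n:ℝ) + 1) * ξ) ≤ ∑ i : Fin (n+1), ν (E i) := by
    have h1 : ∀ i : Fin (n+1), ν (E i)
        = ∫⁻ y, (E i).indicator (fun _ => (1:ℝ≥0∞)) y ∂ν :=
      fun i => (lintegral_indicator_one (hEmeas i)).symm
    rw [Finset.sum_congr rfl (fun i _ => h1 i),
      ← lintegral_finset_sum _ (fun i _ => (measurable_const.indicator (hEmeas i)))]
    calc ENNReal.ofReal (((n:ℝ) + 1) * ξ)
        = ∫⁻ _, ENNReal.ofReal (((n:ℝ) + 1) * ξ) ∂ν := by simp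
      _ ≤ _ := lintegral_mono hcount
  have hkey : ENNReal.ofReal ξ ≤ ν (E (Fin.last n)) := by
    rw [hsumν] at hint
    have hofr : ENNReal.ofReal (((n:ℝ) + 1) * ξ) = ((n+1 : ℕ) : ℝ≥0∞) * ENNReal.ofReal ξ := by
      rw [ENNReal.ofReal_mul (by positivity)]
      congr 1
      rw [show ((n:ℝ) + 1) = ((n+1 : ℕ) : ℝ) by push_cast; ring]
      exact ENNReal.ofReal_natCast _
    rw [hofr] at hint
    exact (ENNReal.mul_le_mul_iff_right (by simp) (ENNReal.natCast_ne_top _)).1 hint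
  -- transfer back to μ and to lambar
  have hEμ : ν (E (Fin.last n)) = μ {ω | 1 - lamhat (Y ω) ≤ g (X (Fin.last n) ω)} := by
    rw [hν, Measure.map_apply hYmeas (hEmeas _)]
    rfl
  have hmono : μ {ω | 1 - lamhat (Y ω) ≤ g (X (Fin.last n) ω)}
      ≤ μ {ω | 1 - lambar (fun i => X i ω) ≤ g (X (Fin.last n) ω)} := by
    apply measure_mono_ae
    filter_upwards [hbar_ge] with ω hω hmem
    have h1 : lamhat (Y ω) ≤ lambar (fun i => X i ω) := hω
    have h2 : 1 - lamhat (Y ω) ≤ g (X (Fin.last n) ω) := hmem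
    show 1 - lambar (fun i => X i ω) ≤ g (X (Fin.last n) ω)
    linarith
  calc ENNReal.ofReal ξ ≤ ν (E (Fin.last n)) := hkey
    _ = μ {ω | 1 - lamhat (Y ω) ≤ g (X (Fin.last n) ω)} := hEμ
    _ ≤ _ := hmono
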